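/- arXiv:2401.00022 — 5 statements merged into one kernel-verified Lean document; each statement's English description precedes it below -/
import Mathlib

section
/- Let $R$ be a finitely generated $\mathbb{N}$-graded algebra over a Noetherian ring $R_0$ which is an integral domain, $I$ a nonzero homogeneous ideal of $R$, and $P \in \mathrm{Ass}(R/I)$. Let $X_P = \{P_1 \in \mathrm{Ass}(R/I) : P \subsetneq P_1\}$ and let $Q$ be the product of the ideals in $X_P$ (with $Q = R$ if $X_P$ is empty). Then $v_P(I)$ equals the smallest $w \in \mathbb{N}$ such that the degree-$w$ graded component of the graded $R$-module $(I : P)/(I : (P + Q^\infty))$ is nonzero. -/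
/-!
Let `S = I : Q^∞`; by Noetherianity `S = I : Q^N` for large `N`, so `S : Q = S`. If `g ∈ I : P`
lies outside `S`, the annihilator of `g` in `R ⧸ S` lies in an associated prime `P' = S : c` of
`R ⧸ S`. Saturation forces `Q ⊄ P'`, and for `q ∈ Q \ P'` one gets `P' = I : c q^N`, so `P'` is
associated to `R ⧸ I`. As `P ⊆ P'` and `P'` does not contain the product `Q` of the associated
primes strictly above `P`, `P' = P`, whence `I : g = P`. Conversely `I : f = P` forbids
`f Q^m ⊆ I`, because `Q ⊄ P`.
-/

namespace Ideal

variable {R : Type*} [CommRing R]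

theorem mem_colon_iff_le_colon_span_singleton {I J : Ideal R} {g : R} :
    g ∈ I.colon (J : Set R) ↔ J ≤ I.colon (span {g}) := by
  simp only [SetLike.le_def, mem_colon_span_singleton]
  simp only [Submodule.mem_colon, SetLike.mem_coe, smul_eq_mul, mul_comm g]

theorem colon_colon (I J K : Ideal R) :
    (I.colon (J : Set R)).colon (K : Set R) = I.colon ((J * K : Ideal R) : Set R) := by
  ext x
  rw [mem_colon_iff_le_colon_span_singleton, mem_colon_iff_le_colon_span_singleton, mul_le]
  simp only [SetLike.le_def, mem_colon_span_singleton]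
  simp only [Submodule.mem_colon, SetLike.mem_coe, smul_eq_mul]
  refine ⟨fun h j hj k hk => ?_, fun h k hk j hj => ?_⟩
  · simpa only [mul_comm, mul_left_comm] using h hk j hj
  · simpa only [mul_comm, mul_left_comm] using h j hj k hk

theorem colon_pow_mono (I Q : Ideal R) :
    Monotone fun m : ℕ => I.colon ((Q ^ m : Ideal R) : Set R) :=
  fun _ _ h => Submodule.colon_mono le_rfl (pow_le_pow_right h)

theorem exists_colon_colon_pow_le [IsNoetherianRing R] (I Q : Ideal R) :
    ∃ N : ℕ, (I.colon ((Q ^ N : Ideal R) : Set R)).colon (Q : Set R)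
      ≤ I.colon ((Q ^ N : Ideal R) : Set R) := by
  obtain ⟨N, hN⟩ := monotone_stabilizes_iff_noetherian.mpr (inferInstance : IsNoetherian R R)
    ⟨_, colon_pow_mono I Q⟩
  refine ⟨N, ?_⟩
  rw [colon_colon, ← pow_succ]
  exact (hN (N + 1) N.le_succ).ge

theorem bot_colon_singleton_quotient_mk (I : Ideal R) (c : R) :
    (⊥ : Submodule R (R ⧸ I)).colon {Quotient.mk I c} = I.colon (span {c}) := by
  ext r
  rw [Submodule.mem_colon_singleton, Submodule.mem_bot, mem_colon_span_singleton,
    ← Quotient.eq_zero_iff_mem, map_mul]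
  rfl

theorem mem_associatedPrimes_quotient_iff [IsNoetherianRing R] {I P : Ideal R} :
    P ∈ associatedPrimes R (R ⧸ I) ↔ P.IsPrime ∧ ∃ c : R, P = I.colon (span {c}) := by
  rw [AssociatedPrimes.mem_iff, isAssociatedPrime_iff, Quotient.mk_surjective.exists]
  simp only [bot_colon_singleton_quotient_mk]

theorem mem_associatedPrimes_of_mem_associatedPrimes_colon [IsNoetherianRing R] {I J P : Ideal R}
    (hP : P ∈ associatedPrimes R (R ⧸ I.colon (J : Set R))) (hJP : ¬ J ≤ P) :
    P ∈ associatedPrimes R (R ⧸ I) := by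
  obtain ⟨hPprime, c, rfl⟩ := mem_associatedPrimes_quotient_iff.mp hP
  obtain ⟨j, hj, hjP⟩ := SetLike.not_le_iff_exists.mp hJP
  refine mem_associatedPrimes_quotient_iff.mpr ⟨hPprime, c * j, le_antisymm (fun r hr => ?_) ?_⟩
  · rw [mem_colon_span_singleton, ← mul_assoc]
    exact Submodule.mem_colon.mp (mem_colon_span_singleton.mp hr) j hj
  · intro r hr
    rw [mem_colon_span_singleton, ← mul_assoc, mul_right_comm] at hr
    have hrj : r * j ∈ (I.colon (J : Set R)).colon (span {c}) :=
      mem_colon_span_singleton.mpr (le_colon hr)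
    exact (hPprime.mem_or_mem hrj).resolve_right hjP

theorem colon_span_singleton_eq_of_notMem_colon_pow [IsNoetherianRing R] {I P Q : Ideal R}
    {g : R} (hmax : ∀ P' ∈ associatedPrimes R (R ⧸ I), P ≤ P' → ¬ Q ≤ P' → P' = P)
    (hgP : g ∈ I.colon (P : Set R)) (hgQ : ∀ m : ℕ, g ∉ I.colon ((Q ^ m : Ideal R) : Set R)) :
    I.colon (span {g}) = P := by
  obtain ⟨N, hsat⟩ := exists_colon_colon_pow_le I Q
  set S := I.colon ((Q ^ N : Ideal R) : Set R)
  have hgS : Quotient.mk S g ≠ 0 := (Quotient.eq_zero_iff_mem.not).mpr (hgQ N)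
  obtain ⟨P', hP'S, hgP'⟩ := exists_le_isAssociatedPrime_of_isNoetherianRing R _ hgS
  rw [bot_colon_singleton_quotient_mk] at hgP'
  have hP'prime : P'.IsPrime := hP'S.isPrime
  have hIgP' : I.colon (span {g}) ≤ P' :=
    le_trans (Submodule.colon_mono le_colon le_rfl) hgP'
  have hQP' : ¬ Q ≤ P' := by
    obtain ⟨-, c, rfl⟩ := mem_associatedPrimes_quotient_iff.mp hP'S
    rw [← mem_colon_iff_le_colon_span_singleton]
    intro hc
    exact hP'prime.ne_top (eq_top_iff_one _ |>.mpr (mem_colon_span_singleton.mpr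
      (by rw [one_mul]; exact hsat hc)))
  have hP'I : P' ∈ associatedPrimes R (R ⧸ I) :=
    mem_associatedPrimes_of_mem_associatedPrimes_colon hP'S
      fun h => hQP' (IsPrime.le_of_pow_le h)
  have hPI : P ≤ I.colon (span {g}) := mem_colon_iff_le_colon_span_singleton.mp hgP
  exact le_antisymm (hmax P' hP'I (hPI.trans hIgP') hQP' ▸ hIgP') hPI

theorem notMem_colon_pow_of_colon_span_singleton_eq {I P Q : Ideal R} [P.IsPrime] {f : R}
    (hf : I.colon (span {f}) = P) (hQP : ¬ Q ≤ P) (m : ℕ) :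
    f ∉ I.colon ((Q ^ m : Ideal R) : Set R) := fun hm =>
  hQP (IsPrime.le_of_pow_le (hf ▸ mem_colon_iff_le_colon_span_singleton.mp hm))

theorem colon_span_singleton_eq_iff [IsNoetherianRing R] {I P Q : Ideal R} [P.IsPrime]
    (hQP : ¬ Q ≤ P) (hmax : ∀ P' ∈ associatedPrimes R (R ⧸ I), P ≤ P' → ¬ Q ≤ P' → P' = P)
    (g : R) : I.colon (span {g}) = P ↔
      g ∈ I.colon (P : Set R) ∧ ∀ m : ℕ, g ∉ I.colon ((Q ^ m : Ideal R) : Set R) :=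
  ⟨fun hg => ⟨mem_colon_iff_le_colon_span_singleton.mpr hg.ge,
      notMem_colon_pow_of_colon_span_singleton_eq hg hQP⟩,
    fun ⟨hgP, hgQ⟩ => colon_span_singleton_eq_of_notMem_colon_pow hmax hgP hgQ⟩

end Ideal

theorem v_invariant_eq_sInf_nonvanishing_degree_general
    {R₀ R : Type*} [CommRing R₀] [IsNoetherianRing R₀]
    [CommRing R] [Algebra R₀ R] [Algebra.FiniteType R₀ R]
    (𝒜 : ℕ → Submodule R₀ R)
    (I : Ideal R)
    (P : Ideal R) (hP : P ∈ associatedPrimes R (R ⧸ I))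
    (XP : Finset (Ideal R))
    (hXP : (↑XP : Set (Ideal R)) = {P₁ | P₁ ∈ associatedPrimes R (R ⧸ I) ∧ P < P₁})
    (Q : Ideal R) (hQ : Q = ∏ p ∈ XP, p) :
    sInf {u : ℕ | ∃ f ∈ 𝒜 u, I.colon (Ideal.span {f}) = P}
      = sInf {w : ℕ | ∃ g ∈ 𝒜 w, g ∈ I.colon P ∧
          ¬ (g ∈ I.colon P ∧ ∃ m : ℕ, g ∈ I.colon ((Q ^ m : Ideal R) : Set R))} := by
  have : IsNoetherianRing R := Algebra.FiniteType.isNoetherianRing R₀ R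
  have : P.IsPrime := hP.isPrime
  have hmemXP (P' : Ideal R) : P' ∈ XP ↔ P' ∈ associatedPrimes R (R ⧸ I) ∧ P < P' :=
    Set.ext_iff.mp hXP P'
  have hQP : ¬ Q ≤ P := by
    rw [hQ, Ideal.IsPrime.prod_le ‹_›]
    rintro ⟨P', hP', hle⟩
    exact ((hmemXP P').mp hP').2.not_ge hle
  have hmax (P' : Ideal R) (hP' : P' ∈ associatedPrimes R (R ⧸ I)) (hle : P ≤ P')
      (hQP' : ¬ Q ≤ P') : P' = P := by
    by_contra hne
    exact hQP' (hQ ▸ Ideal.prod_le_inf.trans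
      (Finset.inf_le ((hmemXP P').mpr ⟨hP', hle.lt_of_ne (Ne.symm hne)⟩)))
  simp only [Ideal.colon_span_singleton_eq_iff hQP hmax]
  congr 1
  ext w
  refine exists_congr fun g => and_congr_right fun _ => ?_
  tauto

/-- Let `R` be a finitely generated `ℕ`-graded algebra over a Noetherian ring
`R₀`, with `R` a domain, `I` a nonzero homogeneous ideal and `P ∈ Ass(R/I)`. Let `XP` be the
(finite) set `{P₁ ∈ Ass(R/I) | P ⊊ P₁}` and `Q` the product of its elements (so `Q = R = ⊤`
if `XP = ∅`). Then `v_P(I)` equals the smallest `w` such that the degree-`w` component of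
`(I : P)/(I : (P + Q^∞))` is nonzero, i.e. the smallest `w` such that there is a homogeneous
element `g` of degree `w` with `g ∈ I : P` and `g ∉ I : (P + Q^∞)`, where membership in
`I : (P + Q^∞)` means `g ∈ I : P` and `g ∈ I : Q^m` for some `m`. -/
theorem v_invariant_eq_sInf_nonvanishing_degree
    {R₀ R : Type*} [CommRing R₀] [IsNoetherianRing R₀]
    [CommRing R] [IsDomain R] [Algebra R₀ R] [Algebra.FiniteType R₀ R]
    (𝒜 : ℕ → Submodule R₀ R) [GradedAlgebra 𝒜]
    (I : Ideal R) (hI0 : I ≠ ⊥) (hIhom : I.IsHomogeneous 𝒜)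
    (P : Ideal R) (hP : P ∈ associatedPrimes R (R ⧸ I))
    (XP : Finset (Ideal R))
    (hXP : (↑XP : Set (Ideal R)) = {P₁ | P₁ ∈ associatedPrimes R (R ⧸ I) ∧ P < P₁})
    (Q : Ideal R) (hQ : Q = ∏ p ∈ XP, p) :
    sInf {u : ℕ | ∃ f ∈ 𝒜 u, I.colon (Ideal.span {f}) = P}
      = sInf {w : ℕ | ∃ g ∈ 𝒜 w, g ∈ I.colon P ∧
          ¬ (g ∈ I.colon P ∧ ∃ m : ℕ, g ∈ I.colon ((Q ^ m : Ideal R) : Set R))} :=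
  v_invariant_eq_sInf_nonvanishing_degree_general 𝒜 I P hP XP hXP Q hQ
end

section
/- Let $R$ be a finitely generated $\mathbb{N}$-graded algebra over a Noetherian ring $R_0$ which is an integral domain, $I$ a nonzero homogeneous ideal of $R$, and $P \in \mathrm{Ass}(R/I)$. Let $X_P = \{P_1 \in \mathrm{Ass}(R/I) : P \subsetneq P_1\}$ and let $Q$ be the product of the ideals in $X_P$ (with $Q = R$ if $X_P$ is empty). If $g \in R$ satisfies $g \in I : P$ and $g \notin I : (P + Q^\infty)$, then $I : g = P$. -/
/-!
Put `J = I : g`, so that `P ≤ J`. If `P ≠ J`, every associated prime of `R ⧸ J` strictly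
contains `P`, and it is also an associated prime of `R ⧸ I`, because multiplication by `g`
embeds `R ⧸ J` into `R ⧸ I`. Hence each of them lies in `XP` and contains `Q`. Since the minimal
primes of `J` are associated primes of `R ⧸ J`, `Q` lies in the radical of `J`, and as `Q` is
finitely generated some power `Q ^ m` lies in `J`, i.e. `g ∈ I : Q ^ m`, a contradiction.
-/

namespace Ideal

variable {R : Type*} [CommRing R]

theorem le_radical_of_forall_le_associatedPrimes [IsNoetherianRing R] {J Q : Ideal R}
    (h : ∀ p ∈ associatedPrimes R (R ⧸ J), Q ≤ p) : Q ≤ J.radical := by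
  rw [← sInf_minimalPrimes]
  refine le_sInf fun p hp ↦ h p ?_
  apply Module.associatedPrimes.minimalPrimes_annihilator_subset_associatedPrimes
  rwa [annihilator_quotient]

theorem le_of_mem_associatedPrimes_quotient {J p : Ideal R}
    (hp : p ∈ associatedPrimes R (R ⧸ J)) : J ≤ p := by
  simpa only [Submodule.annihilator_top, annihilator_quotient] using
    IsAssociatedPrime.annihilator_le hp

theorem associatedPrimes_quotient_colon_subset (I : Ideal R) (g : R) :
    associatedPrimes R (R ⧸ I.colon (span {g})) ⊆ associatedPrimes R (R ⧸ I) := by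
  let f := LinearMap.toSpanSingleton R (R ⧸ I) (Quotient.mk I g)
  have hker : I.colon (span {g}) = LinearMap.ker f := by
    ext x
    simp [f, Algebra.smul_def, ← map_mul, Quotient.eq_zero_iff_mem]
  refine associatedPrimes.subset_of_injective (f := Submodule.liftQ _ f hker.le) ?_
  rw [← LinearMap.ker_eq_bot]
  exact Submodule.ker_liftQ_eq_bot' _ f hker

theorem exists_mem_colon_pow_of_le_radical_colon [IsNoetherianRing R] {I Q : Ideal R} {g : R}
    (hQ : Q ≤ (I.colon (span {g})).radical) :
    ∃ m : ℕ, g ∈ I.colon ((Q ^ m : Ideal R) : Set R) := by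
  obtain ⟨m, hm⟩ := exists_pow_le_of_le_radical_of_fg hQ (IsNoetherian.noetherian Q)
  exact ⟨m, Submodule.mem_colon.mpr fun x hx ↦ by simpa [mul_comm] using hm hx⟩

end Ideal

open Ideal in
theorem colon_eq_of_mem_colon_notMem_colon_infty_general
    {R₀ R : Type*} [CommRing R₀] [IsNoetherianRing R₀]
    [CommRing R] [Algebra R₀ R] [Algebra.FiniteType R₀ R]
    (I : Ideal R)
    (P : Ideal R)
    (XP : Finset (Ideal R))
    (hXP : (↑XP : Set (Ideal R)) = {P₁ | P₁ ∈ associatedPrimes R (R ⧸ I) ∧ P < P₁})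
    (Q : Ideal R) (hQ : Q = ∏ p ∈ XP, p)
    (g : R) (hgP : g ∈ I.colon P)
    (hg : ¬ (g ∈ I.colon P ∧ ∃ m : ℕ, g ∈ I.colon ((Q ^ m : Ideal R) : Set R))) :
    I.colon (Ideal.span {g}) = P := by
  have : IsNoetherianRing R := Algebra.FiniteType.isNoetherianRing R₀ R
  have hPJ : P ≤ I.colon (span {g}) := fun x hx ↦
    mem_colon_span_singleton.mpr (by simpa [mul_comm] using Submodule.mem_colon.mp hgP x hx)
  refine (hPJ.lt_or_eq.resolve_left fun hlt ↦ hg ⟨hgP, ?_⟩).symm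
  refine exists_mem_colon_pow_of_le_radical_colon
    (le_radical_of_forall_le_associatedPrimes fun p hp ↦ ?_)
  have hpXP : p ∈ XP := by
    rw [← Finset.mem_coe, hXP]
    exact ⟨associatedPrimes_quotient_colon_subset I g hp,
      hlt.trans_le (le_of_mem_associatedPrimes_quotient hp)⟩
  rw [hQ]
  exact prod_le_inf.trans (Finset.inf_le hpXP)

/-- Setup as in the paper: `R` a finitely generated `ℕ`-graded algebra over a
Noetherian ring `R₀`, `R` a domain, `I` a nonzero homogeneous ideal, `P ∈ Ass(R/I)`, `XP` the
set `{P₁ ∈ Ass(R/I) | P ⊊ P₁}` and `Q` the product of its elements (`Q = R = ⊤` if `XP = ∅`).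
If `g ∈ R` satisfies `g ∈ I : P` and `g ∉ I : (P + Q^∞)` (i.e. it is not the case that both
`g ∈ I : P` and `g ∈ I : Q^m` for some `m`), then `I : g = P`. -/
theorem colon_eq_of_mem_colon_notMem_colon_infty
    {R₀ R : Type*} [CommRing R₀] [IsNoetherianRing R₀]
    [CommRing R] [IsDomain R] [Algebra R₀ R] [Algebra.FiniteType R₀ R]
    (𝒜 : ℕ → Submodule R₀ R) [GradedAlgebra 𝒜]
    (I : Ideal R) (hI0 : I ≠ ⊥) (hIhom : I.IsHomogeneous 𝒜)
    (P : Ideal R) (hP : P ∈ associatedPrimes R (R ⧸ I))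
    (XP : Finset (Ideal R))
    (hXP : (↑XP : Set (Ideal R)) = {P₁ | P₁ ∈ associatedPrimes R (R ⧸ I) ∧ P < P₁})
    (Q : Ideal R) (hQ : Q = ∏ p ∈ XP, p)
    (g : R) (hgP : g ∈ I.colon P)
    (hg : ¬ (g ∈ I.colon P ∧ ∃ m : ℕ, g ∈ I.colon ((Q ^ m : Ideal R) : Set R))) :
    I.colon (Ideal.span {g}) = P :=
  colon_eq_of_mem_colon_notMem_colon_infty_general (R₀ := R₀) I P XP hXP Q hQ g hgP hg
end

section
/- Let $R$ be a finitely generated $\mathbb{N}$-graded algebra over a Noetherian ring $R_0$ which is an integral domain, $I$ a nonzero homogeneous ideal of $R$, and $P \in \mathrm{Ass}(R/I)$. Let $g \in R$ with $g \notin I$ and suppose $P \subseteq I : g$ with $P \neq I : g$. Then every associated prime $P_1 \in \mathrm{Ass}(R/(I:g))$ satisfies $P \subsetneq P_1$ and $P_1 \in \mathrm{Ass}(R/I)$; consequently, if $Q$ denotes the product of the primes in $X_P = \{P_1 \in \mathrm{Ass}(R/I) : P \subsetneq P_1\}$, then $Q^m g \subseteq I$ for some $m \in \mathbb{N}$. 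-/
/-!
Multiplication by `g` embeds `R ⧸ (I : g)` into `R ⧸ I`, so every associated prime of `R ⧸ (I : g)`
is one of `R ⧸ I`; it contains `I : g`, hence strictly contains `P`. In a Noetherian ring the
minimal primes of `I : g` are associated primes of `R ⧸ (I : g)`, so they all lie in `X_P` and
contain `Q`. Thus `Q` lies in the radical of `I : g`, and since `Q` is finitely generated a power
of `Q` lies in `I : g`.
-/

open Submodule

section

variable {R M : Type*} [CommRing R] [AddCommGroup M] [Module R M]

theorem Submodule.associatedPrimes_quotient_colon_singleton_subset (N : Submodule R M) (x : M) :
    associatedPrimes R (R ⧸ N.colon {x}) ⊆ associatedPrimes R (M ⧸ N) := by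
  let f := LinearMap.toSpanSingleton R (M ⧸ N) (N.mkQ x)
  have hker : N.colon {x} = LinearMap.ker f := by
    ext r
    simp [f, mem_colon_singleton, ← Quotient.mk_smul, Quotient.mk_eq_zero]
  exact associatedPrimes.subset_of_injective
    (LinearMap.ker_eq_bot.mp (ker_liftQ_eq_bot' _ f hker))

theorem Ideal.le_of_mem_associatedPrimes_quotient_s4 {I p : Ideal R}
    (hp : p ∈ associatedPrimes R (R ⧸ I)) : I ≤ p := by
  simpa [Submodule.annihilator_top, Ideal.annihilator_quotient] using
    IsAssociatedPrime.annihilator_le hp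

theorem Ideal.exists_pow_le_of_forall_le_associatedPrimes [IsNoetherianRing R] {I Q : Ideal R}
    (hQ : ∀ p ∈ associatedPrimes R (R ⧸ I), Q ≤ p) : ∃ m : ℕ, Q ^ m ≤ I := by
  have hminimal : I.minimalPrimes ⊆ associatedPrimes R (R ⧸ I) := by
    simpa [Ideal.annihilator_quotient] using
      Module.associatedPrimes.minimalPrimes_annihilator_subset_associatedPrimes R (R ⧸ I)
  have hrad : Q ≤ I.radical := by
    rw [← Ideal.sInf_minimalPrimes]
    exact le_sInf fun p hp => hQ p (hminimal hp)
  exact Ideal.exists_pow_le_of_le_radical_of_fg hrad (IsNoetherian.noetherian Q)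

end

theorem ass_colon_strictly_larger_and_pow_mul_subset_general
    {R₀ R : Type*} [CommRing R₀] [IsNoetherianRing R₀]
    [CommRing R] [Algebra R₀ R] [Algebra.FiniteType R₀ R]
    (I : Ideal R)
    (P : Ideal R)
    (g : R)
    (hle : P ≤ I.colon (Ideal.span {g})) (hne : P ≠ I.colon (Ideal.span {g}))
    (XP : Finset (Ideal R))
    (hXP : (↑XP : Set (Ideal R)) = {P₁ | P₁ ∈ associatedPrimes R (R ⧸ I) ∧ P < P₁})
    (Q : Ideal R) (hQ : Q = ∏ p ∈ XP, p) :
    (∀ P₁ ∈ associatedPrimes R (R ⧸ I.colon (Ideal.span {g})),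
        P < P₁ ∧ P₁ ∈ associatedPrimes R (R ⧸ I)) ∧
      ∃ m : ℕ, g ∈ I.colon ((Q ^ m : Ideal R) : Set R) := by
  have : IsNoetherianRing R := Algebra.FiniteType.isNoetherianRing R₀ R
  have hass (P₁ : Ideal R) (hP₁ : P₁ ∈ associatedPrimes R (R ⧸ I.colon (Ideal.span {g}))) :
      P < P₁ ∧ P₁ ∈ associatedPrimes R (R ⧸ I) :=
    ⟨(hle.lt_of_ne hne).trans_le (Ideal.le_of_mem_associatedPrimes_quotient_s4 hP₁),
      I.associatedPrimes_quotient_colon_singleton_subset g (by rwa [Ideal.colon_span] at hP₁)⟩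
  refine ⟨hass, ?_⟩
  have hQle (P₁ : Ideal R) (hP₁ : P₁ ∈ associatedPrimes R (R ⧸ I.colon (Ideal.span {g}))) :
      Q ≤ P₁ := by
    have hmem : P₁ ∈ XP := by
      rw [← Finset.mem_coe, hXP]
      exact (hass P₁ hP₁).symm
    exact hQ ▸ Ideal.prod_le_inf.trans (Finset.inf_le hmem)
  obtain ⟨m, hm⟩ := Ideal.exists_pow_le_of_forall_le_associatedPrimes hQle
  refine ⟨m, mem_colon.mpr fun q hq => ?_⟩
  simpa [mul_comm] using Ideal.mem_colon_span_singleton.mp (hm hq)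

/-- Setup as in the paper: `R` a finitely generated `ℕ`-graded algebra over a
Noetherian ring `R₀`, `R` a domain, `I` a nonzero homogeneous ideal, `P ∈ Ass(R/I)`.
Let `g ∈ R` with `g ∉ I`, `P ⊆ I : g` and `P ≠ I : g`. Then every associated prime
`P₁ ∈ Ass(R/(I : g))` satisfies `P ⊊ P₁` and `P₁ ∈ Ass(R/I)`; consequently, if `Q` is the
product of the primes in `XP = {P₁ ∈ Ass(R/I) | P ⊊ P₁}`, then `Q^m g ⊆ I`
(i.e. `g ∈ I : Q^m`) for some `m ∈ ℕ`. -/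
theorem ass_colon_strictly_larger_and_pow_mul_subset
    {R₀ R : Type*} [CommRing R₀] [IsNoetherianRing R₀]
    [CommRing R] [IsDomain R] [Algebra R₀ R] [Algebra.FiniteType R₀ R]
    (𝒜 : ℕ → Submodule R₀ R) [GradedAlgebra 𝒜]
    (I : Ideal R) (hI0 : I ≠ ⊥) (hIhom : I.IsHomogeneous 𝒜)
    (P : Ideal R) (hP : P ∈ associatedPrimes R (R ⧸ I))
    (g : R) (hgI : g ∉ I)
    (hle : P ≤ I.colon (Ideal.span {g})) (hne : P ≠ I.colon (Ideal.span {g}))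
    (XP : Finset (Ideal R))
    (hXP : (↑XP : Set (Ideal R)) = {P₁ | P₁ ∈ associatedPrimes R (R ⧸ I) ∧ P < P₁})
    (Q : Ideal R) (hQ : Q = ∏ p ∈ XP, p) :
    (∀ P₁ ∈ associatedPrimes R (R ⧸ I.colon (Ideal.span {g})),
        P < P₁ ∧ P₁ ∈ associatedPrimes R (R ⧸ I)) ∧
      ∃ m : ℕ, g ∈ I.colon ((Q ^ m : Ideal R) : Set R) :=
  ass_colon_strictly_larger_and_pow_mul_subset_general (R₀ := R₀) I P g hle hne XP hXP Q hQ
end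

section
/- Let $R$ be a finitely generated $\mathbb{N}$-graded algebra over a Noetherian ring $R_0$ which is an integral domain, $I$ a nonzero homogeneous ideal of $R$, and $P \in \mathcal{A}(I)$. Let $Q$ be the product of the ideals in $\{P_1 \in \mathcal{A}(I) : P \subsetneq P_1\}$ (with $Q = R$ if this set is empty). Then for all sufficiently large $n$, $v_P(I^{n+1})$ equals the smallest $w \in \mathbb{N}$ such that the degree-$w$ graded component of $(I^{n+1} : P)/(I^{n+1} : (P + Q^\infty))$ is nonzero; moreover, for all sufficiently large $n$ one has $I^{n+1} : P \subseteq I^n$. -/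
/-!
Both sets of degrees in the first assertion are the same set: `I^{n+1} : g = P` holds exactly
when `g ∈ (I^{n+1} : P) \ (I^{n+1} : Q^∞)`. For the converse, `J = I^{n+1} : g` contains `P` and
no power of `Q`, so `Q ⊄ √J`; as the minimal primes of `J` are associated primes of `R/J`, some
associated prime `q` of `R/J` avoids `Q`. It is also associated to `R/I^{n+1}` and contains `P`,
so by the choice of `Q` it is `P`, and `P ⊆ J ⊆ q = P`.

For the second assertion, `I ⊆ P` gives `I^{n+1} : P ⊆ I^{n+1} : I`, which lies in `I^n` for large
`n` (Ratliff–Rush). With `x ∈ I` a nonzerodivisor, the `I`-filtration `x (I^{n+1} : I)` sits inside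
the `I`-adic one, so is stable over a Noetherian ring; cancelling `x`,
`I^{n+2} : I = I (I^{n+1} : I) ⊆ I^{n+1}` for large `n`.
-/

open Submodule

namespace Ideal

variable {R : Type*} [CommRing R]

lemma colon_singleton_colon_singleton (K : Ideal R) (a b : R) :
    (K.colon {a}).colon {b} = K.colon {a * b} := by
  ext r
  simp only [mem_colon_singleton, smul_eq_mul, mul_assoc, mul_comm b]

lemma mem_colon_iff_le_colon_singleton {K L : Ideal R} {g : R} :
    g ∈ K.colon L ↔ L ≤ K.colon {g} := by
  simp only [mem_colon, SetLike.le_def, Set.mem_singleton_iff, forall_eq, SetLike.mem_coe,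
    smul_eq_mul, mul_comm g]

lemma bot_colon_quotient_mk (K : Ideal R) (e : R) :
    (⊥ : Submodule R (R ⧸ K)).colon {Submodule.Quotient.mk e} = K.colon {e} := by
  ext r
  rw [mem_colon_singleton, mem_colon_singleton, Submodule.mem_bot, ← Submodule.Quotient.mk_smul,
    Submodule.Quotient.mk_eq_zero]

lemma isAssociatedPrime_quotient_iff [IsNoetherianRing R] {K P : Ideal R} :
    IsAssociatedPrime P (R ⧸ K) ↔ P.IsPrime ∧ ∃ e : R, P = K.colon {e} := by
  rw [isAssociatedPrime_iff]
  refine and_congr_right fun _ => ⟨?_, ?_⟩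
  · rintro ⟨x, rfl⟩
    obtain ⟨e, rfl⟩ := Submodule.Quotient.mk_surjective _ x
    exact ⟨e, bot_colon_quotient_mk K e⟩
  · rintro ⟨e, rfl⟩
    exact ⟨Submodule.Quotient.mk e, (bot_colon_quotient_mk K e).symm⟩

lemma le_of_isAssociatedPrime_quotient [IsNoetherianRing R] {K P : Ideal R}
    (hP : IsAssociatedPrime P (R ⧸ K)) : K ≤ P := by
  obtain ⟨-, e, rfl⟩ := isAssociatedPrime_quotient_iff.mp hP
  exact le_colon

lemma isAssociatedPrime_quotient_of_colon [IsNoetherianRing R] {K q : Ideal R} {g : R}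
    (hq : IsAssociatedPrime q (R ⧸ K.colon {g})) : IsAssociatedPrime q (R ⧸ K) := by
  obtain ⟨hprime, e, rfl⟩ := isAssociatedPrime_quotient_iff.mp hq
  exact isAssociatedPrime_quotient_iff.mpr
    ⟨hprime, g * e, colon_singleton_colon_singleton K g e⟩

lemma exists_isAssociatedPrime_quotient_not_le [IsNoetherianRing R] {J Q : Ideal R}
    (hQ : ∀ m : ℕ, ¬ Q ^ m ≤ J) : ∃ q, IsAssociatedPrime q (R ⧸ J) ∧ ¬ Q ≤ q := by
  by_contra! h
  have hQJ : Q ≤ J.radical := by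
    have hmin := Module.associatedPrimes.minimalPrimes_annihilator_subset_associatedPrimes R (R ⧸ J)
    rw [annihilator_quotient] at hmin
    rw [← sInf_minimalPrimes]
    exact le_sInf fun p hp => h p (hmin hp)
  obtain ⟨m, hm⟩ := exists_pow_le_of_le_radical_of_fg hQJ (IsNoetherian.noetherian Q)
  exact hQ m hm

theorem colon_singleton_eq_iff [IsNoetherianRing R] {K P Q : Ideal R}
    (hP : IsAssociatedPrime P (R ⧸ K)) (hQP : ¬ Q ≤ P)
    (hQ : ∀ q, IsAssociatedPrime q (R ⧸ K) → P < q → Q ≤ q) (g : R) :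
    K.colon {g} = P ↔ g ∈ K.colon P ∧ ∀ m : ℕ, g ∉ K.colon (Q ^ m : Ideal R) := by
  have := hP.isPrime
  constructor
  · intro hg
    refine ⟨mem_colon_iff_le_colon_singleton.mpr hg.ge, fun m hm => hQP ?_⟩
    exact IsPrime.le_of_pow_le (hg ▸ mem_colon_iff_le_colon_singleton.mp hm)
  · rintro ⟨hgP, hgQ⟩
    have hPJ : P ≤ K.colon {g} := mem_colon_iff_le_colon_singleton.mp hgP
    obtain ⟨q, hq, hQq⟩ := exists_isAssociatedPrime_quotient_not_le fun m hm =>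
      hgQ m (mem_colon_iff_le_colon_singleton.mpr hm)
    have hJq : K.colon {g} ≤ q := le_of_isAssociatedPrime_quotient hq
    have hqP : q = P := (hPJ.trans hJq).eq_or_lt.elim Eq.symm
      fun hlt => absurd (hQ q (isAssociatedPrime_quotient_of_colon hq) hlt) hQq
    exact le_antisymm (hqP ▸ hJq) hPJ

lemma mul_colon_le (K L : Ideal R) : L * K.colon L ≤ K := by
  refine mul_le.mpr fun a ha m hm => ?_
  simpa [mul_comm] using mem_colon.mp hm a ha

lemma mul_colon_pow_succ_le (I : Ideal R) (n : ℕ) :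
    I * (I ^ (n + 1)).colon I ≤ (I ^ (n + 2)).colon I := by
  refine mul_le.mpr fun a ha m hm => mem_colon.mpr fun b hb => ?_
  rw [smul_eq_mul, mul_assoc, pow_succ']
  exact mul_mem_mul ha (mem_colon.mp hm b hb)

theorem exists_colon_pow_succ_le_pow [IsNoetherianRing R] {I : Ideal R} {x : R} (hxI : x ∈ I)
    (hx : IsSMulRegular R x) : ∃ n₀, ∀ n, n₀ ≤ n → (I ^ (n + 1)).colon I ≤ I ^ n := by
  let φ : R →ₗ[R] R := LinearMap.lsmul R R x
  let F : I.Filtration R :=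
    { N := fun n => Submodule.map φ ((I ^ (n + 1)).colon I)
      mono := fun n => Submodule.map_mono (colon_mono (pow_le_pow_right (n + 1).le_succ) le_rfl)
      smul_le := fun n => by
        rw [← Submodule.map_smul'']
        exact Submodule.map_mono (mul_colon_pow_succ_le I n) }
  have hF : F ≤ I.stableFiltration ⊤ := fun n => by
    rintro _ ⟨m, hm, rfl⟩
    simp only [stableFiltration_N, smul_eq_mul, mul_top]
    have hxm : x * m ∈ I ^ (n + 1) := mul_colon_le _ I (mul_mem_mul hxI hm)
    exact pow_le_pow_right n.le_succ hxm
  obtain ⟨k, hk⟩ := (I.stableFiltration_stable ⊤).of_le hF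
  refine ⟨k + 1, fun n hn => ?_⟩
  obtain ⟨j, rfl⟩ : ∃ j, n = j + 1 := ⟨n - 1, by omega⟩
  have hstable : I * (I ^ (j + 1)).colon I = (I ^ (j + 2)).colon I :=
    Submodule.map_injective_of_injective (f := φ) hx
      (by rw [← smul_eq_mul, Submodule.map_smul'']; exact hk j (by omega))
  exact hstable ▸ mul_colon_le _ I

end Ideal

theorem v_invariant_pow_eq_sInf_and_colon_le_general
    {R₀ R : Type*} [CommRing R₀] [IsNoetherianRing R₀]
    [CommRing R] [IsDomain R] [Algebra R₀ R] [Algebra.FiniteType R₀ R]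
    (𝒜 : ℕ → Submodule R₀ R)
    (I : Ideal R) (hI0 : I ≠ ⊥)
    (AI : Set (Ideal R)) (N : ℕ)
    (hAI : ∀ n, N ≤ n → associatedPrimes R (R ⧸ I ^ n) = AI)
    (P : Ideal R) (hP : P ∈ AI)
    (XP : Finset (Ideal R))
    (hXP : (↑XP : Set (Ideal R)) = {P₁ | P₁ ∈ AI ∧ P < P₁})
    (Q : Ideal R) (hQ : Q = ∏ p ∈ XP, p) :
    ∃ n₀ : ℕ, ∀ n, n₀ ≤ n →
      (sInf {u : ℕ | ∃ f ∈ 𝒜 u, (I ^ (n + 1)).colon (Ideal.span {f}) = P}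
          = sInf {w : ℕ | ∃ g ∈ 𝒜 w, g ∈ (I ^ (n + 1)).colon P ∧
              ¬ (g ∈ (I ^ (n + 1)).colon P ∧ ∃ m : ℕ, g ∈ (I ^ (n + 1)).colon (Q ^ m : Ideal R))})
        ∧ (I ^ (n + 1)).colon P ≤ I ^ n := by
  have : IsNoetherianRing R := Algebra.FiniteType.isNoetherianRing R₀ R
  obtain ⟨x, hxI, hx0⟩ := I.ne_bot_iff.mp hI0
  obtain ⟨k, hk⟩ := Ideal.exists_colon_pow_succ_le_pow hxI (smul_right_injective R hx0)
  refine ⟨max N k, fun n hn => ?_⟩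
  rw [← hAI (n + 1) (by omega)] at hP hXP
  have := hP.isPrime
  have hQP : ¬ Q ≤ P := by
    rw [hQ, this.prod_le]
    rintro ⟨p, hp, hpP⟩
    exact (hXP.le hp).2.not_ge hpP
  have hQq (q : Ideal R) (hq : IsAssociatedPrime q (R ⧸ I ^ (n + 1))) (hPq : P < q) : Q ≤ q :=
    hQ ▸ Ideal.prod_le_inf.trans (Finset.inf_le (hXP.ge ⟨hq, hPq⟩))
  refine ⟨?_, ?_⟩
  · congr 1
    ext w
    simp only [Set.mem_ofPred_eq, Ideal.colon_span, Ideal.colon_singleton_eq_iff hP hQP hQq,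
      not_and, not_exists]
    exact exists_congr fun g => and_congr_right fun _ =>
      and_congr_right fun hgP => (imp_iff_right hgP).symm
  · have hIP : I ≤ P := Ideal.IsPrime.le_of_pow_le (Ideal.le_of_isAssociatedPrime_quotient hP)
    exact (colon_mono le_rfl hIP).trans (hk n (by omega))

/-- `R` a finitely generated `ℕ`-graded algebra over a Noetherian ring `R₀`,
`R` a domain, `I` a nonzero homogeneous ideal, `AI = 𝒜(I)` the stable set of asymptotic
associated primes of `I` (so `Ass(R/I^n) = AI` for all `n ≥ N`), `P ∈ AI`, and `Q` the product
of the ideals in `{P₁ ∈ AI | P ⊊ P₁}` (with `Q = R = ⊤` if this set is empty). Then for all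
sufficiently large `n`, `v_P(I^{n+1})` equals the smallest `w` such that the degree-`w`
component of `(I^{n+1} : P)/(I^{n+1} : (P + Q^∞))` is nonzero — i.e. the smallest `w` such
that some homogeneous `g` of degree `w` lies in `I^{n+1} : P` but not in
`I^{n+1} : (P + Q^∞)` — and moreover `I^{n+1} : P ⊆ I^n`. -/
theorem v_invariant_pow_eq_sInf_and_colon_le
    {R₀ R : Type*} [CommRing R₀] [IsNoetherianRing R₀]
    [CommRing R] [IsDomain R] [Algebra R₀ R] [Algebra.FiniteType R₀ R]
    (𝒜 : ℕ → Submodule R₀ R) [GradedAlgebra 𝒜]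
    (I : Ideal R) (hI0 : I ≠ ⊥) (hIhom : I.IsHomogeneous 𝒜)
    (AI : Set (Ideal R)) (N : ℕ)
    (hAI : ∀ n, N ≤ n → associatedPrimes R (R ⧸ I ^ n) = AI)
    (P : Ideal R) (hP : P ∈ AI)
    (XP : Finset (Ideal R))
    (hXP : (↑XP : Set (Ideal R)) = {P₁ | P₁ ∈ AI ∧ P < P₁})
    (Q : Ideal R) (hQ : Q = ∏ p ∈ XP, p) :
    ∃ n₀ : ℕ, ∀ n, n₀ ≤ n →
      (sInf {u : ℕ | ∃ f ∈ 𝒜 u, (I ^ (n + 1)).colon (Ideal.span {f}) = P}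
          = sInf {w : ℕ | ∃ g ∈ 𝒜 w, g ∈ (I ^ (n + 1)).colon P ∧
              ¬ (g ∈ (I ^ (n + 1)).colon P ∧ ∃ m : ℕ, g ∈ (I ^ (n + 1)).colon (Q ^ m : Ideal R))})
        ∧ (I ^ (n + 1)).colon P ≤ I ^ n :=
  v_invariant_pow_eq_sInf_and_colon_le_general 𝒜 I hI0 AI N hAI P hP XP hXP Q hQ
end

section
/- Let $R$ be a finitely generated $\mathbb{N}$-graded algebra over a Noetherian ring $R_0$, and let $A = R[y_1, \dots, y_d]$ be a polynomial extension of $R$, bigraded by $\deg y_i = (d_i, 1)$ for $i = 1, \dots, d$ (with $d_i \in \mathbb{N}$) and $\deg x = (s, 0)$ for every homogeneous $x \in R_s$. Let $U$ be a finitely generated bigraded $A$-module such that for all sufficiently large $n$ there exists $w$ with $U_{(w,n)} \neq 0$. Then the function $n \mapsto \min\{w \in \mathbb{N} : U_{(w,n)} \neq 0\}$ is eventually linear in $n$ with leading coefficient in the set $\{d_1, \dots, d_d\}$; that is, there exist $n_0 \in \mathbb{N}$, $a \in \{d_1,\dots,d_d\}$ and $b \in \mathbb{Z}$ such that $\min\{w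 : U_{(w,n)} \neq 0\} = an + b$ for all $n \geq n_0$. -/
/-!
For a homogeneous submodule `V ⊆ U`, let `supp(U/V)` be the set of bidegrees `(w, n)` with
`U_(w,n) ⊄ V`. By noetherian induction on `V`, `supp(U/V)` is covered by finitely many rows and
finitely many cones `{(w, n) | n ≥ n₀, w ≥ w₀ + dᵢ (n - n₀)}` whose lower edges lie in
`supp(U/V)`. For the inductive step choose a homogeneous `u₀ ∉ V` whose colon ideal `(V : u₀)` is
maximal; maximality makes `(V : u₀)` prime-like, so no power of a variable `yᵢ ∉ (V : u₀)` lies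
in `(V : u₀)`. The bidegrees dropping out of the support when `V` grows to `V + A u₀` are those
of monomials `x yᵐ u₀ ∉ V`, all of whose variables avoid `(V : u₀)`; hence they lie in the cone
with apex `deg u₀` and slope `min {dᵢ | yᵢ ∉ (V : u₀)}`, or in the row of `u₀` when no variable
avoids `(V : u₀)`. For large `n` the least `w` in `supp U` is then a minimum of finitely many
affine functions of `n`, which is eventually the one of lexicographically least
(slope, intercept).
-/

open Filter MvPolynomial DirectSum

theorem Finset.exists_eventually_forall_le_affine {ι : Type*} (s : Finset ι) (hs : s.Nonempty)
    (a b : ι → ℤ) : ∃ j ∈ s, ∀ᶠ n : ℕ in atTop, ∀ i ∈ s, a j * n + b j ≤ a i * n + b i := by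
  obtain ⟨j, hj, hmin⟩ := s.exists_min_image (fun i => toLex (a i, b i)) hs
  refine ⟨j, hj, (eventually_all_finset s).2 fun i hi => ?_⟩
  rcases Prod.Lex.toLex_le_toLex.1 (hmin i hi) with hlt | ⟨heq, hle⟩
  · filter_upwards [eventually_ge_atTop (b j - b i).toNat] with n hn
    have hn' : b j - b i ≤ n := Int.toNat_le.1 hn
    nlinarith
  · exact Eventually.of_forall fun n => by simp only at heq hle; rw [heq]; linarith

structure BidegreeCone (k : ℕ) where
  w : ℕ
  n : ℕ
  i : Fin k

namespace BidegreeCone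

variable {k : ℕ} (d : Fin k → ℕ) (c : BidegreeCone k)

def lowerEdge (n : ℕ) : ℕ := c.w + d c.i * (n - c.n)

def region : Set (ℕ × ℕ) := {p | c.n ≤ p.2 ∧ c.lowerEdge d p.2 ≤ p.1}

theorem cast_lowerEdge {n : ℕ} (hn : c.n ≤ n) :
    (c.lowerEdge d n : ℤ) = d c.i * n + (c.w - d c.i * c.n) := by
  rw [lowerEdge]
  push_cast [Nat.cast_sub hn]
  ring

end BidegreeCone

def IsConeCovered {k : ℕ} (d : Fin k → ℕ) (S : Set (ℕ × ℕ)) : Prop :=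
  ∃ (rows : Finset ℕ) (cones : Finset (BidegreeCone k)),
    (∀ p ∈ S, p.2 ∈ rows ∨ ∃ c ∈ cones, p ∈ c.region d) ∧
    ∀ c ∈ cones, ∀ n, c.n ≤ n → (c.lowerEdge d n, n) ∈ S

namespace IsConeCovered

variable {k : ℕ} {d : Fin k → ℕ} {S T : Set (ℕ × ℕ)}

theorem union (hS : IsConeCovered d S) (hT : IsConeCovered d T) : IsConeCovered d (S ∪ T) := by
  classical
  obtain ⟨rowsS, conesS, hcovS, hedgeS⟩ := hS
  obtain ⟨rowsT, conesT, hcovT, hedgeT⟩ := hT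
  refine ⟨rowsS ∪ rowsT, conesS ∪ conesT, ?_, ?_⟩
  · rintro p (hp | hp)
    · rcases hcovS p hp with h | ⟨c, hc, hpc⟩
      exacts [.inl (Finset.mem_union_left _ h), .inr ⟨c, Finset.mem_union_left _ hc, hpc⟩]
    · rcases hcovT p hp with h | ⟨c, hc, hpc⟩
      exacts [.inl (Finset.mem_union_right _ h), .inr ⟨c, Finset.mem_union_right _ hc, hpc⟩]
  · intro c hc n hn
    rcases Finset.mem_union.1 hc with hc | hc
    exacts [.inl (hedgeS c hc n hn), .inr (hedgeT c hc n hn)]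

theorem of_diff_subset {X : Set (ℕ × ℕ)} (hT : IsConeCovered d T) (hTS : T ⊆ S)
    (hX : IsConeCovered d (S ∩ X)) (hSX : S \ T ⊆ X) : IsConeCovered d S := by
  convert hT.union hX
  ext p
  by_cases hpT : p ∈ T
  · exact ⟨fun _ => .inl hpT, fun _ => hTS hpT⟩
  · exact ⟨fun hp => .inr ⟨hp, hSX ⟨hp, hpT⟩⟩, fun h => (h.resolve_left hpT).1⟩

theorem of_forall_snd_eq (n₀ : ℕ) (h : ∀ p ∈ S, p.2 = n₀) : IsConeCovered d S :=
  ⟨{n₀}, ∅, fun p hp => .inl (Finset.mem_singleton.2 (h p hp)), by simp⟩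

theorem of_subset_region (c : BidegreeCone k) (hS : S ⊆ c.region d)
    (hedge : ∀ n, c.n ≤ n → (c.lowerEdge d n, n) ∈ S) : IsConeCovered d S :=
  ⟨∅, {c}, fun p hp => .inr ⟨c, Finset.mem_singleton_self c, hS hp⟩, by simpa using hedge⟩

theorem exists_eventually_sInf_eq (hS : IsConeCovered d S)
    (hne : ∀ᶠ n in atTop, ∃ w, (w, n) ∈ S) :
    ∃ (i : Fin k) (b : ℤ), ∀ᶠ n in atTop, ((sInf {w | (w, n) ∈ S} : ℕ) : ℤ) = d i * n + b := by
  obtain ⟨rows, cones, hcov, hedge⟩ := hS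
  have hlarge : ∀ᶠ n in atTop, n ∉ rows ∧ ∀ c ∈ cones, c.n ≤ n := by
    refine (eventually_gt_atTop (rows.sup id)).and
      ((eventually_all_finset cones).2 fun c _ => eventually_ge_atTop c.n) |>.mono ?_
    exact fun n ⟨hn, hc⟩ => ⟨fun h => (Finset.le_sup (f := id) h).not_gt hn, hc⟩
  have hcones : cones.Nonempty := by
    obtain ⟨n, ⟨w, hw⟩, hrow, -⟩ := (hne.and hlarge).exists
    obtain ⟨c, hc, -⟩ := (hcov _ hw).resolve_left hrow
    exact ⟨c, hc⟩
  obtain ⟨c, hc, hmin⟩ := cones.exists_eventually_forall_le_affine hcones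
    (fun c => d c.i) (fun c => c.w - d c.i * c.n)
  refine ⟨c.i, c.w - d c.i * c.n, ?_⟩
  filter_upwards [hlarge, hmin] with n ⟨hrow, hstart⟩ hcn
  have hleast : IsLeast {w | (w, n) ∈ S} (c.lowerEdge d n) := by
    refine ⟨hedge c hc n (hstart c hc), fun w hw => ?_⟩
    obtain ⟨c', hc', -, hw'⟩ := (hcov _ hw).resolve_left hrow
    have hle := hcn c' hc'
    rw [← c.cast_lowerEdge d (hstart c hc), ← c'.cast_lowerEdge d (hstart c' hc')] at hle
    exact (Nat.cast_le.1 hle).trans hw'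
  rw [hleast.csInf_eq, c.cast_lowerEdge d (hstart c hc)]

end IsConeCovered

section Colon

variable {A M : Type*} [CommRing A] [AddCommGroup M] [Module A M]

theorem Submodule.exists_colon_singleton_maximal [IsNoetherianRing A] (V : Submodule A M)
    {H : Set M} (hH : ∃ u ∈ H, u ∉ V) :
    ∃ u₀ ∈ H, u₀ ∉ V ∧ ∀ u ∈ H, u ∉ V → ¬ V.colon {u₀} < V.colon {u} := by
  obtain ⟨_, ⟨u₀, hu₀, hu₀V, rfl⟩, hmax⟩ := set_has_maximal_iff_noetherian.2 ‹IsNoetherianRing A›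
    {I | ∃ u ∈ H, u ∉ V ∧ I = V.colon {u}} (let ⟨u, hu, huV⟩ := hH; ⟨_, u, hu, huV, rfl⟩)
  exact ⟨u₀, hu₀, hu₀V, fun u hu huV => hmax _ ⟨u, hu, huV, rfl⟩⟩

theorem Submodule.pow_smul_notMem_of_colon_maximal {V : Submodule A M} {H : Set M} {u₀ : M}
    (hu₀ : u₀ ∈ H)
    (hmax : ∀ u ∈ H, u ∉ V → ¬ V.colon {u₀} < V.colon {u}) {a : A} (haH : ∀ u ∈ H, a • u ∈ H)
    (ha : a • u₀ ∉ V) (j : ℕ) : a ^ j • u₀ ∉ V := by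
  have hH : ∀ j : ℕ, a ^ j • u₀ ∈ H := fun j => by
    induction j with
    | zero => simpa using hu₀
    | succ j ih => simpa [pow_succ', mul_smul] using haH _ ih
  induction j with
  | zero => simpa using fun h => ha (V.smul_mem a h)
  | succ j ih =>
    intro hj
    have hle : V.colon {u₀} ≤ V.colon {a ^ j • u₀} := fun r hr => by
      rw [Submodule.mem_colon_singleton] at hr ⊢
      rw [smul_comm]
      exact V.smul_mem _ hr
    have heq := (hle.lt_or_eq.resolve_left (hmax _ (hH j) ih)).symm
    have haj : a ∈ V.colon {a ^ j • u₀} := by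
      rwa [Submodule.mem_colon_singleton, ← mul_smul, ← pow_succ']
    exact ha (Submodule.mem_colon_singleton.1 (heq ▸ haj))

end Colon

theorem Finsupp.mul_degree_le_weight {σ : Type*} {d : σ → ℕ} {m : σ →₀ ℕ} {c : ℕ}
    (h : ∀ i ∈ m.support, c ≤ d i) : c * degree m ≤ weight d m := by
  rw [degree_apply, weight_apply, Finsupp.sum, Finset.mul_sum]
  exact Finset.sum_le_sum fun i hi => by
    rw [smul_eq_mul, mul_comm]
    exact Nat.mul_le_mul_left _ (h i hi)

section Monomial

variable {σ R M : Type*} [CommRing R] [AddCommGroup M] [Module (MvPolynomial σ R) M]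

theorem MvPolynomial.monomial_smul_mem_of_X_smul_mem (V : Submodule (MvPolynomial σ R) M)
    {u : M} {i : σ} (hX : (X i : MvPolynomial σ R) • u ∈ V) {m : σ →₀ ℕ} (hi : m i ≠ 0) (x : R) :
    monomial m x • u ∈ V := by
  rw [← Finsupp.sub_add_single_one_cancel hi, monomial_add_single, pow_one, mul_smul]
  exact V.smul_mem _ hX

theorem MvPolynomial.smul_mem_of_forall_monomial_smul_mem {ι R₀ : Type*} [CommRing R₀]
    [Algebra R₀ R] [DecidableEq ι] (𝒜 : ι → Submodule R₀ R) [Decomposition 𝒜] {u : M}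
    (W : AddSubgroup M) (h : ∀ m s x, x ∈ 𝒜 s → (monomial m x : MvPolynomial σ R) • u ∈ W)
    (a : MvPolynomial σ R) : a • u ∈ W := by
  classical
  rw [← support_sum_monomial_coeff a, Finset.sum_smul]
  refine W.sum_mem fun m _ => ?_
  rw [← sum_support_decompose 𝒜 (a.coeff m), map_sum, Finset.sum_smul]
  exact W.sum_mem fun s _ => h m s _ (SetLike.coe_mem _)

end Monomial

section QuotientSupport

variable {ι R₀ A U : Type*} [Semiring R₀] [Semiring A] [AddCommMonoid U] [Module R₀ U] [Module A U]

def quotientSupport (𝒰 : ι → Submodule R₀ U) (V : Submodule A U) : Set ι :=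
  {p | ∃ u ∈ 𝒰 p, u ∉ V}

theorem quotientSupport_anti (𝒰 : ι → Submodule R₀ U) {V V' : Submodule A U} (h : V ≤ V') :
    quotientSupport 𝒰 V' ⊆ quotientSupport 𝒰 V :=
  fun _ ⟨u, hu, huV'⟩ => ⟨u, hu, fun huV => huV' (h huV)⟩

theorem quotientSupport_bot (𝒰 : ι → Submodule R₀ U) :
    quotientSupport 𝒰 (⊥ : Submodule A U) = {p | 𝒰 p ≠ ⊥} := by
  ext p
  simp [quotientSupport, Submodule.ne_bot_iff]

end QuotientSupport

section Bigraded

variable {R₀ R : Type*} [CommRing R₀] [CommRing R] [Algebra R₀ R] {k : ℕ}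
  {U : Type*} [AddCommGroup U] [Module R₀ U] [Module (MvPolynomial (Fin k) R) U]

structure IsBigradedModule (𝒜 : ℕ → Submodule R₀ R) (d : Fin k → ℕ)
    (𝒰 : ℕ × ℕ → Submodule R₀ U) : Prop where
  C_smul_mem : ∀ (s : ℕ) (x : R), x ∈ 𝒜 s → ∀ (w n : ℕ) (u : U), u ∈ 𝒰 (w, n) →
    (C x : MvPolynomial (Fin k) R) • u ∈ 𝒰 (w + s, n)
  X_smul_mem : ∀ (i : Fin k) (w n : ℕ) (u : U), u ∈ 𝒰 (w, n) →
    (X i : MvPolynomial (Fin k) R) • u ∈ 𝒰 (w + d i, n + 1)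

namespace IsBigradedModule

variable {𝒜 : ℕ → Submodule R₀ R} {d : Fin k → ℕ} {𝒰 : ℕ × ℕ → Submodule R₀ U}
  (hU : IsBigradedModule 𝒜 d 𝒰)
include hU

theorem X_pow_smul_mem (i : Fin k) (e : ℕ) {w n : ℕ} {u : U} (hu : u ∈ 𝒰 (w, n)) :
    (X i ^ e : MvPolynomial (Fin k) R) • u ∈ 𝒰 (w + e * d i, n + e) := by
  induction e with
  | zero => simpa using hu
  | succ e ih =>
    rw [pow_succ', mul_smul]
    convert hU.X_smul_mem i _ _ _ ih using 3 <;> ring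

theorem monomial_smul_mem {s : ℕ} {x : R} (hx : x ∈ 𝒜 s) (m : Fin k →₀ ℕ) {w n : ℕ} {u : U}
    (hu : u ∈ 𝒰 (w, n)) :
    (monomial m x : MvPolynomial (Fin k) R) • u ∈
      𝒰 (w + s + Finsupp.weight d m, n + Finsupp.degree m) := by
  induction m using Finsupp.induction with
  | zero => simpa [monomial_zero'] using hU.C_smul_mem s x hx w n u hu
  | single_add i e m _ _ ih =>
    rw [monomial_single_add, mul_smul]
    convert hU.X_pow_smul_mem i e ih using 3
    · simp only [map_add, Finsupp.weight_single, smul_eq_mul]; ring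
    · simp only [map_add, Finsupp.degree_single]; ring

theorem lowerEdge_mem_quotientSupport {V : Submodule (MvPolynomial (Fin k) R) U} {w₀ n₀ : ℕ}
    {u₀ : U} (hu₀ : u₀ ∈ 𝒰 (w₀, n₀))
    (hmax : ∀ u ∈ {u | SetLike.IsHomogeneousElem 𝒰 u}, u ∉ V → ¬ V.colon {u₀} < V.colon {u})
    {i : Fin k} (hi : (X i : MvPolynomial (Fin k) R) • u₀ ∉ V) {n : ℕ} (hn : n₀ ≤ n) :
    ((⟨w₀, n₀, i⟩ : BidegreeCone k).lowerEdge d n, n) ∈ quotientSupport 𝒰 V := by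
  refine ⟨_, ?_, V.pow_smul_notMem_of_colon_maximal (H := {u | SetLike.IsHomogeneousElem 𝒰 u})
    ⟨_, hu₀⟩ hmax (fun u ⟨⟨w, n⟩, hu⟩ => ⟨_, hU.X_smul_mem i w n u hu⟩) hi (n - n₀)⟩
  convert hU.X_pow_smul_mem i (n - n₀) hu₀ using 3
  · simp only [BidegreeCone.lowerEdge]; ring
  · omega

variable [Decomposition 𝒰] [Decomposition 𝒜]

/-- For arbitrary `W` this says: the `δ`-component of `a • u₀` lies in the additive span of the
monomial pieces `monomial m x • u₀` (with `x` homogeneous) of bidegree `δ`. -/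
theorem decompose_smul_mem {w₀ n₀ : ℕ} {u₀ : U} (hu₀ : u₀ ∈ 𝒰 (w₀, n₀)) (δ : ℕ × ℕ)
    (W : AddSubgroup U)
    (h : ∀ m s x, x ∈ 𝒜 s → (w₀ + s + Finsupp.weight d m, n₀ + Finsupp.degree m) = δ →
      (monomial m x : MvPolynomial (Fin k) R) • u₀ ∈ W)
    (a : MvPolynomial (Fin k) R) : (decompose 𝒰 (a • u₀) δ : U) ∈ W := by
  let π : U →+ U :=
    { toFun u := decompose 𝒰 u δ, map_zero' := by simp, map_add' := by simp }
  refine smul_mem_of_forall_monomial_smul_mem 𝒜 (W.comap π) (fun m s x hx => ?_) a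
  have hmem := hU.monomial_smul_mem hx m hu₀
  rw [AddSubgroup.mem_comap]
  change (decompose 𝒰 _ δ : U) ∈ W
  by_cases hδ : (w₀ + s + Finsupp.weight d m, n₀ + Finsupp.degree m) = δ
  · rw [decompose_of_mem_same 𝒰 (hδ ▸ hmem)]
    exact h m s x hx hδ
  · rw [decompose_of_mem_ne 𝒰 hmem hδ]
    exact W.zero_mem

theorem isHomogeneous_sup_span_singleton {V : Submodule (MvPolynomial (Fin k) R) U}
    (hV : V.IsHomogeneous 𝒰) {w₀ n₀ : ℕ} {u₀ : U} (hu₀ : u₀ ∈ 𝒰 (w₀, n₀)) :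
    (V ⊔ Submodule.span (MvPolynomial (Fin k) R) {u₀}).IsHomogeneous 𝒰 := by
  intro δ u hu
  obtain ⟨v, hv, _, hz, rfl⟩ := Submodule.mem_sup.1 hu
  obtain ⟨a, rfl⟩ := Submodule.mem_span_singleton.1 hz
  rw [decompose_add, DirectSum.add_apply, Submodule.coe_add]
  refine add_mem (Submodule.mem_sup_left (hV δ hv)) ?_
  exact hU.decompose_smul_mem hu₀ δ (V ⊔ _).toAddSubgroup (fun m s x _ _ =>
    Submodule.mem_sup_right (Submodule.smul_mem _ _ (Submodule.mem_span_singleton_self u₀))) a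

theorem exists_monomial_smul_notMem {V : Submodule (MvPolynomial (Fin k) R) U}
    (hV : V.IsHomogeneous 𝒰) {w₀ n₀ : ℕ} {u₀ : U} (hu₀ : u₀ ∈ 𝒰 (w₀, n₀)) {p : ℕ × ℕ}
    (hp : p ∈ quotientSupport 𝒰 V \
      quotientSupport 𝒰 (V ⊔ Submodule.span (MvPolynomial (Fin k) R) {u₀})) :
    ∃ m s x, x ∈ 𝒜 s ∧ (monomial m x : MvPolynomial (Fin k) R) • u₀ ∉ V ∧
      (w₀ + s + Finsupp.weight d m, n₀ + Finsupp.degree m) = p := by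
  obtain ⟨⟨u, hu, huV⟩, hpV'⟩ := hp
  obtain ⟨v, hv, _, hz, rfl⟩ := Submodule.mem_sup.1 (not_not.1 fun h => hpV' ⟨_, hu, h⟩)
  obtain ⟨a, rfl⟩ := Submodule.mem_span_singleton.1 hz
  by_contra! H
  apply huV
  rw [← decompose_of_mem_same 𝒰 hu, decompose_add, DirectSum.add_apply, Submodule.coe_add]
  exact add_mem (hV p hv) (hU.decompose_smul_mem hu₀ p V.toAddSubgroup
    (fun m s x hx hp => not_not.1 fun hV' => H m s x hx hV' hp) a)

theorem quotientSupport_diff_subset_region {V : Submodule (MvPolynomial (Fin k) R) U}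
    (hV : V.IsHomogeneous 𝒰) {w₀ n₀ : ℕ} {u₀ : U} (hu₀ : u₀ ∈ 𝒰 (w₀, n₀)) {i : Fin k}
    (hmin : ∀ j, (X j : MvPolynomial (Fin k) R) • u₀ ∉ V → d i ≤ d j) :
    quotientSupport 𝒰 V \ quotientSupport 𝒰 (V ⊔ Submodule.span (MvPolynomial (Fin k) R) {u₀}) ⊆
      (⟨w₀, n₀, i⟩ : BidegreeCone k).region d := by
  intro p hp
  obtain ⟨m, s, x, -, hmV, rfl⟩ := hU.exists_monomial_smul_notMem hV hu₀ hp
  have hd : d i * Finsupp.degree m ≤ Finsupp.weight d m :=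
    Finsupp.mul_degree_le_weight fun j hj => hmin j fun hXj =>
      hmV (monomial_smul_mem_of_X_smul_mem V hXj (Finsupp.mem_support_iff.1 hj) x)
  simp only [BidegreeCone.region, BidegreeCone.lowerEdge, Set.mem_ofPred_eq,
    Nat.add_sub_cancel_left]
  omega

theorem quotientSupport_diff_subset_row {V : Submodule (MvPolynomial (Fin k) R) U}
    (hV : V.IsHomogeneous 𝒰) {w₀ n₀ : ℕ} {u₀ : U} (hu₀ : u₀ ∈ 𝒰 (w₀, n₀))
    (hX : ∀ i, (X i : MvPolynomial (Fin k) R) • u₀ ∈ V) :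
    quotientSupport 𝒰 V \ quotientSupport 𝒰 (V ⊔ Submodule.span (MvPolynomial (Fin k) R) {u₀}) ⊆
      {p | p.2 = n₀} := by
  intro p hp
  obtain ⟨m, s, x, -, hmV, rfl⟩ := hU.exists_monomial_smul_notMem hV hu₀ hp
  obtain rfl : m = 0 := by
    by_contra hm
    obtain ⟨j, hj⟩ := Finsupp.ne_iff.1 hm
    exact hmV (monomial_smul_mem_of_X_smul_mem V (hX j) hj x)
  simp

theorem isConeCovered_of_sup_span_singleton {V : Submodule (MvPolynomial (Fin k) R) U}
    (hV : V.IsHomogeneous 𝒰) {w₀ n₀ : ℕ} {u₀ : U} (hu₀ : u₀ ∈ 𝒰 (w₀, n₀))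
    (hmax : ∀ u ∈ {u | SetLike.IsHomogeneousElem 𝒰 u}, u ∉ V → ¬ V.colon {u₀} < V.colon {u})
    (hcov : IsConeCovered d
      (quotientSupport 𝒰 (V ⊔ Submodule.span (MvPolynomial (Fin k) R) {u₀}))) :
    IsConeCovered d (quotientSupport 𝒰 V) := by
  have hanti := quotientSupport_anti 𝒰 (le_sup_left : V ≤ V ⊔ Submodule.span _ {u₀})
  by_cases hX : ∀ i, (X i : MvPolynomial (Fin k) R) • u₀ ∈ V
  · exact hcov.of_diff_subset hanti (.of_forall_snd_eq n₀ fun p hp => hp.2)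
      (hU.quotientSupport_diff_subset_row hV hu₀ hX)
  · classical
    obtain ⟨i, hi, hmin⟩ := Finset.exists_min_image
      {i | (X i : MvPolynomial (Fin k) R) • u₀ ∉ V} d (by simpa [Finset.Nonempty] using hX)
    simp only [Finset.mem_filter, Finset.mem_univ, true_and] at hi hmin
    exact hcov.of_diff_subset hanti
      (.of_subset_region _ Set.inter_subset_right fun n hn =>
        ⟨hU.lowerEdge_mem_quotientSupport hu₀ hmax hi hn, hn, le_rfl⟩)
      (hU.quotientSupport_diff_subset_region hV hu₀ hmin)

theorem isConeCovered_quotientSupport [IsNoetherianRing (MvPolynomial (Fin k) R)]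
    [IsNoetherian (MvPolynomial (Fin k) R) U]
    (V : Submodule (MvPolynomial (Fin k) R) U) (hV : V.IsHomogeneous 𝒰) :
    IsConeCovered d (quotientSupport 𝒰 V) := by
  induction V using WellFoundedGT.induction with
  | _ V ih =>
  by_cases hH : ∃ u ∈ {u | SetLike.IsHomogeneousElem 𝒰 u}, u ∉ V
  · obtain ⟨u₀, ⟨⟨w₀, n₀⟩, hu₀⟩, hu₀V, hmax⟩ := V.exists_colon_singleton_maximal hH
    refine hU.isConeCovered_of_sup_span_singleton hV hu₀ hmax (ih _ ?_ ?_)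
    · exact left_lt_sup.2 fun h => hu₀V (h (Submodule.mem_span_singleton_self u₀))
    · exact hU.isHomogeneous_sup_span_singleton hV hu₀
  · exact ⟨∅, ∅, fun p ⟨u, hu, huV⟩ => (hH ⟨u, ⟨p, hu⟩, huV⟩).elim, by simp⟩

end IsBigradedModule

end Bigraded

theorem min_degree_bigraded_module_eventually_linear_general
    {R₀ R : Type*} [CommRing R₀] [IsNoetherianRing R₀]
    [CommRing R] [Algebra R₀ R] [Algebra.FiniteType R₀ R]
    (𝒜 : ℕ → Submodule R₀ R) [GradedAlgebra 𝒜]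
    (k : ℕ) (d : Fin k → ℕ)
    (U : Type*) [AddCommGroup U] [Module R₀ U]
    [Module (MvPolynomial (Fin k) R) U]
    [Module.Finite (MvPolynomial (Fin k) R) U]
    (𝒰 : ℕ × ℕ → Submodule R₀ U)
    (hdec : DirectSum.IsInternal 𝒰)
    (hC : ∀ (s : ℕ) (x : R), x ∈ 𝒜 s → ∀ (w n : ℕ) (u : U), u ∈ 𝒰 (w, n) →
      (MvPolynomial.C x : MvPolynomial (Fin k) R) • u ∈ 𝒰 (w + s, n))
    (hX : ∀ (i : Fin k) (w n : ℕ) (u : U), u ∈ 𝒰 (w, n) →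
      (MvPolynomial.X i : MvPolynomial (Fin k) R) • u ∈ 𝒰 (w + d i, n + 1))
    (N : ℕ) (hne : ∀ n, N ≤ n → ∃ w, 𝒰 (w, n) ≠ ⊥) :
    ∃ (n₀ : ℕ) (i : Fin k) (b : ℤ), ∀ n, n₀ ≤ n →
      ((sInf {w : ℕ | 𝒰 (w, n) ≠ ⊥} : ℕ) : ℤ) = (d i : ℤ) * n + b := by
  have : IsNoetherianRing R := Algebra.FiniteType.isNoetherianRing R₀ R
  let := hdec.chooseDecomposition
  have hcov := IsBigradedModule.isConeCovered_quotientSupport ⟨hC, hX⟩ ⊥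
    fun δ u hu => by simp [(Submodule.mem_bot _).1 hu]
  rw [quotientSupport_bot] at hcov
  obtain ⟨i, b, hlin⟩ := hcov.exists_eventually_sInf_eq (eventually_atTop.2 ⟨N, hne⟩)
  obtain ⟨n₀, hn₀⟩ := eventually_atTop.1 hlin
  exact ⟨n₀, i, b, hn₀⟩

/-- Let `R` be a finitely generated `ℕ`-graded algebra over a Noetherian ring
`R₀`, and let `A = R[y₁, …, y_k]` (formalized as `MvPolynomial (Fin k) R`) be bigraded by
`deg yᵢ = (dᵢ, 1)` and `deg x = (s, 0)` for `x ∈ R_s`. Let `U` be a finitely generated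
bigraded `A`-module: `U` decomposes as an internal direct sum of `R₀`-submodules
`𝒰 (w, n)`, with `C x • 𝒰 (w, n) ⊆ 𝒰 (w + s, n)` for `x ∈ R_s` and
`yᵢ • 𝒰 (w, n) ⊆ 𝒰 (w + dᵢ, n + 1)`. Assume that for all sufficiently large `n` there is
some `w` with `U_{(w,n)} ≠ 0`. Then `n ↦ min {w | U_{(w,n)} ≠ 0}` is eventually linear in
`n` with leading coefficient among `d₁, …, d_k`. -/
theorem min_degree_bigraded_module_eventually_linear
    {R₀ R : Type*} [CommRing R₀] [IsNoetherianRing R₀]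
    [CommRing R] [Algebra R₀ R] [Algebra.FiniteType R₀ R]
    (𝒜 : ℕ → Submodule R₀ R) [GradedAlgebra 𝒜]
    (k : ℕ) (d : Fin k → ℕ)
    (U : Type*) [AddCommGroup U] [Module R₀ U]
    [Module (MvPolynomial (Fin k) R) U]
    [IsScalarTower R₀ (MvPolynomial (Fin k) R) U]
    [Module.Finite (MvPolynomial (Fin k) R) U]
    (𝒰 : ℕ × ℕ → Submodule R₀ U)
    (hdec : DirectSum.IsInternal 𝒰)
    (hC : ∀ (s : ℕ) (x : R), x ∈ 𝒜 s → ∀ (w n : ℕ) (u : U), u ∈ 𝒰 (w, n) →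
      (MvPolynomial.C x : MvPolynomial (Fin k) R) • u ∈ 𝒰 (w + s, n))
    (hX : ∀ (i : Fin k) (w n : ℕ) (u : U), u ∈ 𝒰 (w, n) →
      (MvPolynomial.X i : MvPolynomial (Fin k) R) • u ∈ 𝒰 (w + d i, n + 1))
    (N : ℕ) (hne : ∀ n, N ≤ n → ∃ w, 𝒰 (w, n) ≠ ⊥) :
    ∃ (n₀ : ℕ) (i : Fin k) (b : ℤ), ∀ n, n₀ ≤ n →
      ((sInf {w : ℕ | 𝒰 (w, n) ≠ ⊥} : ℕ) : ℤ) = (d i : ℤ) * n + b :=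
  min_degree_bigraded_module_eventually_linear_general 𝒜 k d U 𝒰 hdec hC hX N hne
end
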